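/- arXiv:2005.02275 — 5 statements merged into one kernel-verified Lean document; each statement's English description precedes it below -/
import Mathlib

section
/- Let T(x) = √(1-2x) and H₀(x) = 1/40 − T(x)²/12 + T(x)⁴/8 − T(x)⁵/15 for x < 1/2. Then for every integer n ≥ 3, the n-th derivative of H₀ is H₀^{(n)}(x) = (2n-7)!! / T(x)^{2n-5}. In particular H₀^{(n)}(0) = (2n-7)!! for n ≥ 3. -/
/-!
Write T = √(1 - 2x). Since dT/dx = -1/T, every integer power satisfies
d(T^m)/dx = -m T^(m-2). H₀ is a polynomial in T, and differentiating it three times gives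
H₀' = 1/6 - T²/2 + T³/3, H₀'' = 1 - T, H₀''' = T⁻¹. From then on each derivative is a
multiple of an odd negative power of T, and d/dx T^(-(2k+1)) = (2k+1) T^(-(2k+3)) produces
the double factorials.
-/

noncomputable def H0 : ℝ → ℝ := fun x =>
  1/40 - (Real.sqrt (1 - 2*x))^2/12 + (Real.sqrt (1 - 2*x))^4/8
    - (Real.sqrt (1 - 2*x))^5/15

open Set
open scoped Nat

theorem Set.EqOn.iteratedDeriv_succ {𝕜 F : Type*} [NontriviallyNormedField 𝕜]
    [NormedAddCommGroup F] [NormedSpace 𝕜 F] {f g g' : 𝕜 → F} {U : Set 𝕜} {k : ℕ}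
    (hk : EqOn (iteratedDeriv k f) g U) (hU : IsOpen U) (hg : ∀ x ∈ U, HasDerivAt g (g' x) x) :
    EqOn (iteratedDeriv (k + 1) f) g' U := by
  intro x hx
  rw [_root_.iteratedDeriv_succ, (hk.eventuallyEq_of_mem (hU.mem_nhds hx)).deriv_eq,
    (hg x hx).deriv]

theorem hasDerivAt_sqrt_one_sub_two_mul_zpow (m : ℤ) {x : ℝ} (hx : x < 1 / 2) :
    HasDerivAt (fun y => √(1 - 2 * y) ^ m) (-m * √(1 - 2 * x) ^ (m - 2)) x := by
  have hs : √(1 - 2 * x) ≠ 0 := (Real.sqrt_pos.2 (by linarith)).ne'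
  have hsqrt := (((hasDerivAt_id x).const_mul 2).const_sub 1).sqrt (by simp; linarith)
  refine ((hasDerivAt_zpow m _ (Or.inl hs)).comp x hsqrt).congr_deriv ?_
  rw [zpow_sub₀ hs, zpow_sub₀ hs]
  simp only [id]
  field_simp

theorem eqOn_iteratedDeriv_three_H0 :
    EqOn (iteratedDeriv 3 H0) (fun x => √(1 - 2 * x) ^ (-1 : ℤ)) (Iio (1 / 2)) := by
  have hT := fun m x (hx : x ∈ Iio (1 / 2 : ℝ)) => hasDerivAt_sqrt_one_sub_two_mul_zpow m hx
  have h0 : EqOn (iteratedDeriv 0 H0)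
      (fun x => 1 / 40 - √(1 - 2 * x) ^ (2 : ℤ) / 12 + √(1 - 2 * x) ^ (4 : ℤ) / 8
        - √(1 - 2 * x) ^ (5 : ℤ) / 15) (Iio (1 / 2)) :=
    fun x _ => by simp [H0]
  have h1 : EqOn (iteratedDeriv 1 H0)
      (fun x => 1 / 6 - √(1 - 2 * x) ^ (2 : ℤ) / 2 + √(1 - 2 * x) ^ (3 : ℤ) / 3) (Iio (1 / 2)) :=
    h0.iteratedDeriv_succ isOpen_Iio fun x hx =>
      ((((hT 2 x hx).div_const 12).const_sub _).add ((hT 4 x hx).div_const 8)).sub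
        ((hT 5 x hx).div_const 15) |>.congr_deriv (by norm_num; ring)
  have h2 : EqOn (iteratedDeriv 2 H0) (fun x => 1 - √(1 - 2 * x) ^ (1 : ℤ)) (Iio (1 / 2)) :=
    h1.iteratedDeriv_succ isOpen_Iio fun x hx =>
      (((hT 2 x hx).div_const 2).const_sub _).add ((hT 3 x hx).div_const 3) |>.congr_deriv
        (by norm_num; ring)
  exact h2.iteratedDeriv_succ isOpen_Iio fun x hx =>
    (hT 1 x hx).const_sub 1 |>.congr_deriv (by norm_num)

theorem eqOn_iteratedDeriv_add_three_H0 (k : ℕ) :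
    EqOn (iteratedDeriv (k + 3) H0)
      (fun x => ((2 * k - 1)‼ : ℝ) * √(1 - 2 * x) ^ (-(2 * k + 1) : ℤ)) (Iio (1 / 2)) := by
  induction k with
  | zero => simpa using eqOn_iteratedDeriv_three_H0
  | succ k ih =>
    refine ih.iteratedDeriv_succ isOpen_Iio fun x hx =>
      ((hasDerivAt_sqrt_one_sub_two_mul_zpow _ hx).const_mul _).congr_deriv ?_
    rw [show 2 * (k + 1) - 1 = 2 * k + 1 by omega, Nat.doubleFactorial_add_one]
    push_cast
    rw [show -(2 * ((k : ℤ) + 1) + 1) = -(2 * k + 1) - 2 by ring]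
    ring

theorem stmt2 (n : ℕ) (hn : 3 ≤ n) :
    (∀ x : ℝ, x < 1/2 →
      iteratedDeriv n H0 x
        = (Nat.doubleFactorial (2*n - 7) : ℝ) / (Real.sqrt (1 - 2*x))^(2*n - 5)) ∧
    iteratedDeriv n H0 0 = (Nat.doubleFactorial (2*n - 7) : ℝ) := by
  obtain ⟨k, rfl⟩ : ∃ k, n = k + 3 := ⟨n - 3, by omega⟩
  have hformula : ∀ x : ℝ, x < 1 / 2 →
      iteratedDeriv (k + 3) H0 x = ((2 * k - 1)‼ : ℝ) / √(1 - 2 * x) ^ (2 * k + 1) := by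
    intro x hx
    rw [eqOn_iteratedDeriv_add_three_H0 k hx, div_eq_mul_inv, ← zpow_natCast, ← zpow_neg]
    push_cast
    rfl
  rw [show 2 * (k + 3) - 7 = 2 * k - 1 by omega, show 2 * (k + 3) - 5 = 2 * k + 1 by omega]
  exact ⟨hformula, by simpa using hformula 0 (by norm_num)⟩
end

section
/- Let T(x) = √(1-2x) and H₀(x) = 1/40 − T²/12 + T⁴/8 − T⁵/15 for x < 1/2. Then H₀ satisfies the differential equation x·H₀''(x) − (3/2)·H₀'(x) − (1/4)·(H₀''(x))² = 0. -/
/-! With `T = √(1 - 2x)` one has `T' = -1/T`, so `H₀' = x - 1/3 + T³/3` and `H₀'' = 1 - T`.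
Substituting `x = (1 - T²)/2` turns the equation into a polynomial identity in `T`. -/

open Filter Topology

lemma hasDerivAt_sqrt_one_sub_two_mul {x : ℝ} (hx : x < 1/2) :
    HasDerivAt (fun y => √(1 - 2*y)) (-(√(1 - 2*x))⁻¹) x := by
  have hpos : 0 < 1 - 2*x := by linarith
  have hlin : HasDerivAt (fun y : ℝ => 1 - 2*y) (-2) x := by
    simpa using ((hasDerivAt_id x).const_mul (2:ℝ)).const_sub 1
  convert hlin.sqrt hpos.ne' using 1
  have : √(1 - 2*x) ≠ 0 := (Real.sqrt_pos.mpr hpos).ne'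
  field_simp

lemma hasDerivAt_sqrt_one_sub_two_mul_pow {x : ℝ} (hx : x < 1/2) (n : ℕ) :
    HasDerivAt (fun y => √(1 - 2*y)^(n + 2)) (-(n + 2) * √(1 - 2*x)^n) x := by
  have hpos : 0 < √(1 - 2*x) := Real.sqrt_pos.mpr (by linarith)
  refine ((hasDerivAt_sqrt_one_sub_two_mul hx).pow (n + 2)).congr_deriv ?_
  field_simp
  push_cast
  ring

lemma hasDerivAt_H0 {x : ℝ} (hx : x < 1/2) :
    HasDerivAt H0 (x - 1/3 + √(1 - 2*x)^3/3) x := by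
  have hT2 : √(1 - 2*x)^2 = 1 - 2*x := Real.sq_sqrt (by linarith)
  have hT n := hasDerivAt_sqrt_one_sub_two_mul_pow hx n
  refine ((((hT 0).div_const 12).const_sub (1/40)).add ((hT 2).div_const 8)).sub
    ((hT 3).div_const 15) |>.congr_deriv ?_
  push_cast
  linear_combination -hT2 / 2

lemma deriv_H0_eventuallyEq {x : ℝ} (hx : x < 1/2) :
    deriv H0 =ᶠ[𝓝 x] fun y => y - 1/3 + √(1 - 2*y)^3/3 := by
  filter_upwards [Iio_mem_nhds hx] with y hy using (hasDerivAt_H0 hy).deriv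

lemma iteratedDeriv_two_H0 {x : ℝ} (hx : x < 1/2) :
    iteratedDeriv 2 H0 x = 1 - √(1 - 2*x) := by
  rw [iteratedDeriv_succ, iteratedDeriv_one, (deriv_H0_eventuallyEq hx).deriv_eq]
  refine (((hasDerivAt_id x).sub_const (1/3)).add
    ((hasDerivAt_sqrt_one_sub_two_mul_pow hx 1).div_const 3)).deriv.trans ?_
  push_cast
  ring

theorem stmt3 (x : ℝ) (hx : x < 1/2) :
    x * iteratedDeriv 2 H0 x - (3/2) * deriv H0 x
      - (1/4) * (iteratedDeriv 2 H0 x)^2 = 0 := by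
  have hT2 : √(1 - 2*x)^2 = 1 - 2*x := Real.sq_sqrt (by linarith)
  rw [iteratedDeriv_two_H0 hx, (hasDerivAt_H0 hx).deriv]
  linear_combination (-1/4 - √(1 - 2*x)/2) * hT2
end

section
/- Let T(x) = √(1-2x), H₀(x) = 1/40 − T²/12 + T⁴/8 − T⁵/15, H₁(x) = (1/24)log(1/T) + (1/24)(1−T), and H₂(x) = (7/1440)·T^{−5} + (5/1152)·T^{−4} + (7/5760)·T^{−3} for 0 < x < 1/2. Then x·H₂'' + (5/2)·H₂' − (1/2)·H₀''·H₂'' − (1/4)·(H₁'')² − (1/24)·H₁'''' = 0. -/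
noncomputable def H1 : ℝ → ℝ := fun x =>
  (1/24) * Real.log (1 / Real.sqrt (1 - 2*x)) + (1/24) * (1 - Real.sqrt (1 - 2*x))

noncomputable def H2 : ℝ → ℝ := fun x =>
  (7/1440) / (Real.sqrt (1 - 2*x))^5 + (5/1152) / (Real.sqrt (1 - 2*x))^4
    + (7/5760) / (Real.sqrt (1 - 2*x))^3

/-!
With `T = √(1 - 2x)` one has `dT/dx = -1/T`, hence `d/dx T^n = -n T^(n-2)` for every integer `n`.
So `H₀`, `H₂` and `H₁'` are Laurent polynomials in `T` whose derivatives of all orders are again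
Laurent polynomials, computed by acting on their coefficient lists. Substituting
`x = (1 - T²)/2`, the recursion becomes an identity between rational functions of `T`.
-/

open Set

namespace MasurVeech

noncomputable def T (x : ℝ) : ℝ := √(1 - 2 * x)

variable {x : ℝ}

lemma T_pos (hx : x < 1 / 2) : 0 < T x :=
  Real.sqrt_pos.mpr (by linarith)

lemma T_sq (hx : x < 1 / 2) : T x ^ 2 = 1 - 2 * x :=
  Real.sq_sqrt (by linarith)

lemma hasDerivAt_T (hx : x < 1 / 2) : HasDerivAt T (-(T x)⁻¹) x := by
  have hlin : HasDerivAt (fun y => 1 - 2 * y) (-2) x := by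
    simpa using ((hasDerivAt_id' x).const_mul 2).const_sub 1
  refine (hlin.sqrt (by linarith)).congr_deriv ?_
  have hT := (T_pos hx).ne'
  simp only [T] at hT ⊢
  field_simp

lemma hasDerivAt_T_zpow (n : ℤ) (hx : x < 1 / 2) :
    HasDerivAt (fun y => T y ^ n) (-n * T x ^ (n - 2)) x := by
  have hT := (T_pos hx).ne'
  refine ((hasDerivAt_zpow n (T x) (Or.inl hT)).comp x (hasDerivAt_T hx)).congr_deriv ?_
  rw [show n - 1 = (n - 2) + 1 by ring, zpow_add_one₀ hT]
  field_simp

noncomputable def laurentT (l : List (ℝ × ℤ)) (x : ℝ) : ℝ :=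
  (l.map fun p => p.1 * T x ^ p.2).sum

def derivCoeffs (l : List (ℝ × ℤ)) : List (ℝ × ℤ) :=
  l.map fun p => (-p.2 * p.1, p.2 - 2)

lemma hasDerivAt_laurentT (l : List (ℝ × ℤ)) (hx : x < 1 / 2) :
    HasDerivAt (laurentT l) (laurentT (derivCoeffs l) x) x := by
  induction l with
  | nil => exact hasDerivAt_const x (0 : ℝ)
  | cons p l ih =>
    exact (((hasDerivAt_T_zpow p.2 hx).const_mul p.1).add ih).congr_deriv (by
      simp only [laurentT, derivCoeffs, List.map_cons, List.sum_cons]; ring)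

lemma iteratedDeriv_eqOn_laurentT {f : ℝ → ℝ} {l : List (ℝ × ℤ)}
    (hf : EqOn f (laurentT l) (Iio (1 / 2))) (k : ℕ) :
    EqOn (iteratedDeriv k f) (laurentT (derivCoeffs^[k] l)) (Iio (1 / 2)) := by
  induction k with
  | zero => simpa using hf
  | succ k ih =>
    intro y hy
    rw [iteratedDeriv_succ, Function.iterate_succ_apply',
      (Filter.eventuallyEq_of_mem (isOpen_Iio.mem_nhds hy) ih).deriv_eq]
    exact (hasDerivAt_laurentT _ hy).deriv

lemma H0_eq_laurentT : H0 = laurentT [(1/40, 0), (-1/12, 2), (1/8, 4), (-1/15, 5)] := by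
  funext y
  simp only [H0, laurentT, T, List.map_cons, List.map_nil, List.sum_cons, List.sum_nil,
    zpow_ofNat, pow_zero]
  ring

lemma H2_eq_laurentT : H2 = laurentT [(7/1440, -5), (5/1152, -4), (7/5760, -3)] := by
  funext y
  simp only [H2, laurentT, T, List.map_cons, List.map_nil, List.sum_cons, List.sum_nil,
    zpow_neg, zpow_ofNat]
  ring

lemma hasDerivAt_H1 (hx : x < 1 / 2) :
    HasDerivAt H1 (laurentT [(1/24, -2), (1/24, -1)] x) x := by
  have hT := (T_pos hx).ne'
  have h := (((hasDerivAt_T hx).log hT).const_mul (1 / 24)).neg.add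
    (((hasDerivAt_T hx).const_sub 1).const_mul (1 / 24))
  have hH1 : H1 = fun y => -(1 / 24 * Real.log (T y)) + 1 / 24 * (1 - T y) := by
    funext y
    simp [H1, T, Real.log_inv]
  rw [hH1]
  refine h.congr_deriv ?_
  simp only [laurentT, List.map_cons, List.map_nil, List.sum_cons, List.sum_nil, zpow_neg,
    zpow_ofNat]
  field_simp
  ring

end MasurVeech

open MasurVeech in
theorem stmt5_general (x : ℝ) (hx : x < 1/2) :
    x * iteratedDeriv 2 H2 x + (5/2) * deriv H2 x
      - (1/2) * iteratedDeriv 2 H0 x * iteratedDeriv 2 H2 x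
      - (1/4) * (iteratedDeriv 2 H1 x)^2
      - (1/24) * iteratedDeriv 4 H1 x = 0 := by
  have hDH1 : EqOn (deriv H1) (laurentT [(1/24, -2), (1/24, -1)]) (Iio (1 / 2)) :=
    fun y hy => (hasDerivAt_H1 hy).deriv
  rw [← iteratedDeriv_one (f := H2), iteratedDeriv_succ' (n := 1) (f := H1),
    iteratedDeriv_succ' (n := 3) (f := H1), H0_eq_laurentT, H2_eq_laurentT,
    iteratedDeriv_eqOn_laurentT (eqOn_refl _ _) 2 hx,
    iteratedDeriv_eqOn_laurentT (eqOn_refl _ _) 1 hx,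
    iteratedDeriv_eqOn_laurentT (eqOn_refl _ _) 2 hx,
    iteratedDeriv_eqOn_laurentT hDH1 1 hx, iteratedDeriv_eqOn_laurentT hDH1 3 hx]
  norm_num [laurentT, derivCoeffs]
  have hT := (T_pos hx).ne'
  have hx' : x = (1 - T x ^ 2) / 2 := by linarith [T_sq hx]
  generalize T x = t at hT hx' ⊢
  subst hx'
  field_simp
  ring

theorem stmt5 (x : ℝ) (hx0 : 0 < x) (hx : x < 1/2) :
    x * iteratedDeriv 2 H2 x + (5/2) * deriv H2 x
      - (1/2) * iteratedDeriv 2 H0 x * iteratedDeriv 2 H2 x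
      - (1/4) * (iteratedDeriv 2 H1 x)^2
      - (1/24) * iteratedDeriv 4 H1 x = 0 :=
  stmt5_general x hx
end

section
/- With the recursion of the previous context defining a_{g,n}, one has a_{0,n} = (2n-7)!! for all n ≥ 3, where (−1)!! = 1!! = 1. -/
/-!
Since `2 ^ j * (2j - 1)‼ = (j + 1)! * catalan j`, the binomial convolution of odd double factorials
is the Catalan recursion in disguise: `∑_{i+j=k} C(k+2, i+1) (2i-1)‼ (2j-1)‼ = 2 (2k+1)‼`.
Removing the two boundary terms of this identity leaves exactly the genus-zero recursion
`(n - 4) a₀,ₙ = ½ ∑ C(n-1, n₁-2) a₀,ₙ₁ a₀,ₙ₂` evaluated at `a₀,ₘ = (2m-7)‼` (the terms with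
`nᵢ = 2` vanish because `a₀,₂ = 0`), so the claim follows by strong induction on `n`.
-/

open Finset Nat

namespace Nat

theorem two_pow_mul_doubleFactorial_eq_factorial_mul_centralBinom (j : ℕ) :
    2 ^ j * (2 * j - 1)‼ = j ! * centralBinom j := by
  induction j with
  | zero => rfl
  | succ j ih =>
    have hodd : (2 * (j + 1) - 1)‼ = (2 * j + 1) * (2 * j - 1)‼ := by
      rw [show 2 * (j + 1) - 1 = 2 * j + 1 by omega, doubleFactorial_add_one]
    calc 2 ^ (j + 1) * (2 * (j + 1) - 1)‼ = 2 * (2 * j + 1) * (2 ^ j * (2 * j - 1)‼) := by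
          rw [hodd]; ring
      _ = j ! * ((j + 1) * centralBinom (j + 1)) := by
          rw [ih, succ_mul_centralBinom_succ]; ring
      _ = (j + 1)! * centralBinom (j + 1) := by rw [factorial_succ]; ring

theorem two_pow_mul_doubleFactorial_eq_factorial_mul_catalan (j : ℕ) :
    2 ^ j * (2 * j - 1)‼ = (j + 1)! * catalan j := by
  rw [two_pow_mul_doubleFactorial_eq_factorial_mul_centralBinom,
    ← succ_mul_catalan_eq_centralBinom, factorial_succ]
  ring

theorem sum_antidiagonal_choose_mul_doubleFactorial_two_mul_sub_one (k : ℕ) :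
    ∑ p ∈ antidiagonal k, (k + 2).choose (p.1 + 1) * (2 * p.1 - 1)‼ * (2 * p.2 - 1)‼ =
      2 * (2 * k + 1)‼ := by
  refine Nat.eq_of_mul_eq_mul_left (pow_pos two_pos k) ?_
  have hterm : ∀ p ∈ antidiagonal k,
      2 ^ k * ((k + 2).choose (p.1 + 1) * (2 * p.1 - 1)‼ * (2 * p.2 - 1)‼) =
        (k + 2)! * (catalan p.1 * catalan p.2) := by
    rintro ⟨i, j⟩ hij
    rw [HasAntidiagonal.mem_antidiagonal] at hij
    subst hij
    calc 2 ^ (i + j) * ((i + j + 2).choose (i + 1) * (2 * i - 1)‼ * (2 * j - 1)‼)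
        = (i + j + 2).choose (i + 1) * (2 ^ i * (2 * i - 1)‼) * (2 ^ j * (2 * j - 1)‼) := by ring
      _ = (i + j + 2).choose (i + 1) * (j + 1)! * (i + 1)! * (catalan i * catalan j) := by
          rw [two_pow_mul_doubleFactorial_eq_factorial_mul_catalan,
            two_pow_mul_doubleFactorial_eq_factorial_mul_catalan]; ring
      _ = (i + j + 2)! * (catalan i * catalan j) := by
          rw [show i + j + 2 = (j + 1) + (i + 1) by ring, add_choose_mul_factorial_mul_factorial]
  have htop := two_pow_mul_doubleFactorial_eq_factorial_mul_catalan (k + 1)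
  rw [show 2 * (k + 1) - 1 = 2 * k + 1 by omega] at htop
  calc 2 ^ k * ∑ p ∈ antidiagonal k, (k + 2).choose (p.1 + 1) * (2 * p.1 - 1)‼ * (2 * p.2 - 1)‼
      = (k + 2)! * catalan (k + 1) := by
        rw [mul_sum, sum_congr rfl hterm, ← mul_sum, catalan_succ']
    _ = 2 ^ k * (2 * (2 * k + 1)‼) := by rw [← htop]; ring

theorem sum_antidiagonal_choose_mul_doubleFactorial_two_mul_add_one (m : ℕ) :
    ∑ p ∈ antidiagonal m, (m + 4).choose (p.1 + 2) * (2 * p.1 + 1)‼ * (2 * p.2 + 1)‼ =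
      2 * (m + 1) * (2 * m + 3)‼ := by
  have h := sum_antidiagonal_choose_mul_doubleFactorial_two_mul_sub_one (m + 2)
  rw [Finset.Nat.sum_antidiagonal_succ, Finset.Nat.sum_antidiagonal_succ'] at h
  have hodd : (2 * (m + 2) + 1)‼ = (2 * m + 5) * (2 * m + 3)‼ := doubleFactorial_add_two _
  have hchoose : (m + 4).choose (m + 3) = m + 4 := choose_succ_self_right _
  simp only [Nat.mul_zero, Nat.zero_sub, Nat.zero_add, show 2 * (m + 1 + 1) - 1 = 2 * m + 3 by omega,
    show ∀ i, 2 * (i + 1) - 1 = 2 * i + 1 from fun i ↦ by omega, hodd] at h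
  simp only [add_assoc, Nat.reduceAdd, hchoose, choose_one_right, show 0‼ = 1 from rfl,
    mul_one] at h
  linear_combination h

end Nat

theorem Finset.Nat.sum_antidiagonal_add_add_ite {M : Type*} [AddCommMonoid M] (n k l : ℕ)
    (f : ℕ × ℕ → M) :
    ∑ p ∈ antidiagonal (n + k + l), (if k ≤ p.1 ∧ l ≤ p.2 then f p else 0) =
      ∑ p ∈ antidiagonal n, f (p.1 + k, p.2 + l) := by
  rw [← sum_filter]
  refine sum_nbij' (fun p ↦ (p.1 - k, p.2 - l)) (fun p ↦ (p.1 + k, p.2 + l)) ?_ ?_ ?_ ?_ ?_ <;>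
    simp +contextual [Nat.sub_add_cancel] <;> omega

theorem sum_antidiagonal_ite_eq_sum_shift_four {R : Type*} [Semiring R] {b : ℕ → R}
    (hb2 : b 2 = 0) (c : ℕ → R) (m : ℕ) :
    ∑ q ∈ antidiagonal (m + 8),
        (if 2 ≤ q.1 ∧ 2 ≤ q.2 ∧ ¬q.1 = 3 ∧ ¬q.2 = 3 then c q.1 * b q.1 * b q.2 else 0) =
      ∑ p ∈ antidiagonal m, c (p.1 + 4) * b (p.1 + 4) * b (p.2 + 4) := by
  rw [← Finset.Nat.sum_antidiagonal_add_add_ite m 4 4 fun q ↦ c q.1 * b q.1 * b q.2]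
  refine sum_congr rfl fun ⟨i, j⟩ _ ↦ ?_
  dsimp only
  by_cases hij : 4 ≤ i ∧ 4 ≤ j
  · rw [if_pos ⟨by omega, by omega, by omega, by omega⟩, if_pos hij]
  · rw [if_neg hij, ite_eq_right_iff]
    intro h
    obtain rfl | rfl : i = 2 ∨ j = 2 := by omega
    all_goals simp [hb2]

theorem stmt10_general (a : ℕ → ℕ → ℚ)
    (h02 : a 0 2 = 0) (h03 : a 0 3 = 1) (h04 : a 0 4 = 1)
    (hrec : ∀ g n : ℕ, 1 ≤ n → 0 < 2*(g:ℤ) - 2 + n →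
      (g, n) ≠ (0, 3) → (g, n) ≠ (0, 4) →
      a g n =
        (1/2) * (∑ p ∈ Finset.HasAntidiagonal.antidiagonal g, ∑ q ∈ Finset.HasAntidiagonal.antidiagonal (n+3),
            if 2 ≤ q.1 ∧ 2 ≤ q.2 ∧ (p.1, q.1) ≠ (0, 3) ∧ (p.2, q.2) ≠ (0, 3) then
              (Nat.choose (n-1) (q.1 - 2) : ℚ) * a p.1 q.1 * a p.2 q.2
            else 0) / (4*(g:ℚ) - 4 + n)
        + (1/12) * (if g = 0 then 0 else a (g-1) (n+3)) / (4*(g:ℚ) - 4 + n)) :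
    ∀ n : ℕ, 3 ≤ n → a 0 n = (Nat.doubleFactorial (2*n - 7) : ℚ) := by
  intro n hn
  induction n using Nat.strong_induction_on with | _ n ih => ?_
  obtain rfl | rfl | hn5 : n = 3 ∨ n = 4 ∨ 5 ≤ n := by omega
  · simpa using h03
  · simpa using h04
  obtain ⟨m, rfl⟩ := Nat.exists_eq_add_of_le' hn5
  have hsum : ∑ p ∈ antidiagonal m,
      ((m + 4).choose (p.1 + 4 - 2) : ℚ) * a 0 (p.1 + 4) * a 0 (p.2 + 4) =
        ((2 * (m + 1) * (2 * m + 3)‼ : ℕ) : ℚ) := by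
    rw [← sum_antidiagonal_choose_mul_doubleFactorial_two_mul_add_one, Nat.cast_sum]
    refine sum_congr rfl ?_
    rintro ⟨i, j⟩ hij
    rw [HasAntidiagonal.mem_antidiagonal] at hij
    rw [ih (i + 4) (by omega) (by omega), ih (j + 4) (by omega) (by omega)]
    simp [show 2 * (i + 4) - 7 = 2 * i + 1 by omega, show 2 * (j + 4) - 7 = 2 * j + 1 by omega]
  have h := hrec 0 (m + 5) (by omega) (by omega) (by simp) (by simp)
  simp only [one_div, HasAntidiagonal.antidiagonal_zero, ne_eq, Prod.mk.injEq, not_and,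
    Nat.add_one_sub_one, sum_singleton, forall_const, CharP.cast_eq_zero, mul_zero, zero_sub,
    cast_add, cast_ofNat, ↓reduceIte, zero_div, add_zero] at h
  rw [show m + 5 + 3 = m + 8 from rfl,
    sum_antidiagonal_ite_eq_sum_shift_four h02 fun i ↦ ((m + 4).choose (i - 2) : ℚ), hsum] at h
  rw [h, show (-4 : ℚ) + (m + 5) = m + 1 by ring, show 2 * (m + 5) - 7 = 2 * m + 3 by omega]
  push_cast
  field_simp

theorem stmt10 (a : ℕ → ℕ → ℚ)
    (h01 : a 0 1 = 0) (h02 : a 0 2 = 0) (h03 : a 0 3 = 1) (h04 : a 0 4 = 1)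
    (hrec : ∀ g n : ℕ, 1 ≤ n → 0 < 2*(g:ℤ) - 2 + n →
      (g, n) ≠ (0, 3) → (g, n) ≠ (0, 4) →
      a g n =
        (1/2) * (∑ p ∈ Finset.HasAntidiagonal.antidiagonal g, ∑ q ∈ Finset.HasAntidiagonal.antidiagonal (n+3),
            if 2 ≤ q.1 ∧ 2 ≤ q.2 ∧ (p.1, q.1) ≠ (0, 3) ∧ (p.2, q.2) ≠ (0, 3) then
              (Nat.choose (n-1) (q.1 - 2) : ℚ) * a p.1 q.1 * a p.2 q.2
            else 0) / (4*(g:ℚ) - 4 + n)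
        + (1/12) * (if g = 0 then 0 else a (g-1) (n+3)) / (4*(g:ℚ) - 4 + n)) :
    ∀ n : ℕ, 3 ≤ n → a 0 n = (Nat.doubleFactorial (2*n - 7) : ℚ) :=
  stmt10_general a h02 h03 h04 hrec
end

section
/- For each fixed g ≥ 2, with κ_g a positive constant, the numbers Vol Q_{g,n} := 2^{2g+1+n}·π^{6g-6+2n}·((4g-4+n)!/(6g-7+2n)!)·Σ_{j=0}^{g} b_{g,j}·((5g-5-j)/2)_n (where b_{g,j} ≥ 0 are fixed reals with b_{g,0} > 0 and (c)_n = c(c+1)⋯(c+n-1) is the Pochhammer symbol) satisfy Vol Q_{g,n} · 2^n / (n^{g/2}·π^{2n}) → κ_g as n → ∞, where κ_g = 2^{2g+1}·π^{6g-6}·b_{g,0}·lim_{n→∞} 2^{2n}·(4g-4+n)!·((5g-5)/2)_n/(n^{g/2}·(6g-7+2n)!). -/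
/-!
Euler's limit for `Γ` gives `(x)_n ~ n! n^(x-1) / Γ(x)`, hence also `(A+n)! ~ n! n^A`, and
Stirling's formula gives `2^(2n) (n!)² / (2n)! ~ √(π n)`. Combining them,
`2^(2n) (A+n)! (x)_n / (B+2n)! ~ √π / (Γ(x) 2^B) · n^(A+x-B-1/2)`.
With `A = 4g-4`, `B = 6g-7` and `x = (5g-5-j)/2` the exponent is `(g-j)/2`, so after dividing
by `n^(g/2)` only the term `j = 0` survives.
-/

open Filter Topology Finset Nat Real

theorem ascPochhammer_eval_eq_prod_range {R : Type*} [CommSemiring R] (x : R) (n : ℕ) :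
    (ascPochhammer R n).eval x = ∏ k ∈ range n, (x + k) := by
  induction n with
  | zero => simp
  | succ n ih => rw [ascPochhammer_succ_eval, ih, prod_range_succ]

theorem Real.tendsto_ascPochhammer_div_factorial_mul_rpow {x : ℝ} (hx : Gamma x ≠ 0) :
    Tendsto (fun n : ℕ => (ascPochhammer ℝ n).eval x / ((n ! : ℝ) * (n : ℝ) ^ (x - 1)))
      atTop (𝓝 (1 / Gamma x)) := by
  have hshift : Tendsto (fun n : ℕ => (n : ℝ) / (x + n)) atTop (𝓝 1) :=
    (tendsto_natCast_div_add_atTop x).congr fun n => by rw [add_comm]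
  refine (hshift.div (GammaSeq_tendsto_Gamma x) hx).congr' ?_
  filter_upwards [eventually_gt_atTop 0, eventually_gt_atTop ⌈-x⌉₊] with n hn hn'
  have hn0 : (0 : ℝ) < n := by exact_mod_cast hn
  have hxn : x + n ≠ 0 := by linarith [Nat.lt_of_ceil_lt hn']
  rw [Pi.div_apply, GammaSeq, prod_range_succ, ← ascPochhammer_eval_eq_prod_range,
    rpow_sub_one hn0.ne']
  field_simp

theorem tendsto_factorial_add_div_factorial_mul_pow (A : ℕ) :
    Tendsto (fun n : ℕ => ((A + n)! : ℝ) / ((n ! : ℝ) * (n : ℝ) ^ A)) atTop (𝓝 1) := by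
  have h := (tendsto_ascPochhammer_div_factorial_mul_rpow
    (x := A + 1) (Gamma_pos_of_pos (by positivity)).ne').const_mul (A ! : ℝ)
  rw [Gamma_nat_eq_factorial, mul_one_div_cancel (by positivity)] at h
  refine h.congr fun n => ?_
  rw [← factorial_mul_ascPochhammer, add_sub_cancel_right, rpow_natCast, mul_div_assoc]

theorem Stirling.stirlingSeq_sq_div_stirlingSeq_two_mul {n : ℕ} (hn : n ≠ 0) :
    Stirling.stirlingSeq n ^ 2 / Stirling.stirlingSeq (2 * n)
      = 2 ^ (2 * n) * (n ! : ℝ) ^ 2 / ((2 * n)! * √n) := by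
  have hn0 : (0 : ℝ) < n := by positivity
  have hsqrt : √(2 * (2 * n : ℕ) : ℝ) = 2 * √n := by
    rw [Nat.cast_mul, Nat.cast_two, ← mul_assoc, show (2 : ℝ) * 2 = 2 ^ 2 by norm_num,
      sqrt_mul (by positivity), sqrt_sq (by norm_num)]
  have hpow : ((2 * n : ℕ) / exp 1 : ℝ) ^ (2 * n) = 2 ^ (2 * n) * ((n / exp 1) ^ n) ^ 2 := by
    rw [← pow_mul, mul_comm n 2, ← mul_pow]
    push_cast
    ring
  have hsq : √(2 * n : ℝ) ^ 2 = 2 * n := sq_sqrt (by positivity)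
  unfold Stirling.stirlingSeq
  rw [div_pow, mul_pow, hsq, hsqrt, hpow]
  field_simp
  exact sq_sqrt hn0.le

theorem Stirling.tendsto_four_pow_mul_factorial_sq_div :
    Tendsto (fun n : ℕ => 2 ^ (2 * n) * (n ! : ℝ) ^ 2 / ((2 * n)! * √n)) atTop (𝓝 √π) := by
  have hπ : √π ≠ 0 := by positivity
  have h := (tendsto_stirlingSeq_sqrt_pi.pow 2).div
    (tendsto_stirlingSeq_sqrt_pi.comp (tendsto_id.const_mul_atTop' two_pos)) hπ
  rw [sq, mul_div_cancel_right₀ _ hπ] at h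
  refine h.congr' ?_
  filter_upwards [eventually_ne_atTop 0] with n hn
  exact stirlingSeq_sq_div_stirlingSeq_two_mul hn

noncomputable def factorialPochhammerRatio (A B : ℕ) (x q : ℝ) (n : ℕ) : ℝ :=
  2 ^ (2 * n) * ((A + n)! : ℝ) * (ascPochhammer ℝ n).eval x / ((n : ℝ) ^ q * ((B + 2 * n)! : ℝ))

theorem tendsto_factorialPochhammerRatio (A B : ℕ) {x : ℝ} (hx : Gamma x ≠ 0) :
    Tendsto (factorialPochhammerRatio A B x (A + x - B - 1 / 2)) atTop
      (𝓝 (√π / (Gamma x * 2 ^ B))) := by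
  have hB : Tendsto
      (fun n : ℕ => ((B + 2 * n)! : ℝ) / ((2 * n)! * ((2 * n : ℕ) : ℝ) ^ B) * 2 ^ B)
      atTop (𝓝 (1 * 2 ^ B)) :=
    ((tendsto_factorial_add_div_factorial_mul_pow B).comp
      (tendsto_id.const_mul_atTop' two_pos)).mul_const _
  have h := ((Stirling.tendsto_four_pow_mul_factorial_sq_div.mul
    (tendsto_factorial_add_div_factorial_mul_pow A)).mul
    (tendsto_ascPochhammer_div_factorial_mul_rpow hx)).div hB (by positivity)
  rw [mul_one, one_mul, mul_one_div, div_div] at h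
  refine h.congr' ?_
  filter_upwards [eventually_gt_atTop 0] with n hn
  have hn0 : (0 : ℝ) < n := by exact_mod_cast hn
  have hpow : (n : ℝ) ^ (A + x - B - 1 / 2) = √n * n ^ A * n ^ (x - 1) / n ^ B := by
    rw [sqrt_eq_rpow, ← rpow_natCast, ← rpow_natCast, ← rpow_add hn0, ← rpow_add hn0,
      ← rpow_sub hn0]
    ring_nf
  simp only [Pi.div_apply, factorialPochhammerRatio, hpow]
  field_simp
  push_cast
  ring

theorem tendsto_factorialPochhammerRatio_of_lt (A B : ℕ) {x q : ℝ} (hx : Gamma x ≠ 0)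
    (hq : A + x - B - 1 / 2 < q) :
    Tendsto (factorialPochhammerRatio A B x q) atTop (𝓝 0) := by
  have hdecay : Tendsto (fun n : ℕ => (n : ℝ) ^ (-(q - (A + x - B - 1 / 2)))) atTop (𝓝 0) :=
    (tendsto_rpow_neg_atTop (sub_pos.2 hq)).comp tendsto_natCast_atTop_atTop
  have h := (tendsto_factorialPochhammerRatio A B hx).mul hdecay
  rw [mul_zero] at h
  refine h.congr' ?_
  filter_upwards [eventually_gt_atTop 0] with n hn
  have hn0 : (0 : ℝ) < n := by exact_mod_cast hn
  have hsplit : (n : ℝ) ^ q = n ^ (A + x - B - 1 / 2) * n ^ (q - (A + x - B - 1 / 2)) := by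
    rw [← rpow_add hn0, add_sub_cancel]
  simp only [factorialPochhammerRatio, hsplit, rpow_neg hn0.le]
  field_simp

theorem tendsto_sum_factorialPochhammerRatio (A B : ℕ) {ι : Type*} [DecidableEq ι]
    {s : Finset ι} {i₀ : ι} (hi₀ : i₀ ∈ s) (b : ι → ℝ) {x : ι → ℝ} {q : ℝ}
    (hx : ∀ i ∈ s, Gamma (x i) ≠ 0) (hq₀ : A + x i₀ - B - 1 / 2 = q)
    (hq : ∀ i ∈ s, i ≠ i₀ → A + x i - B - 1 / 2 < q) :
    Tendsto (fun n => ∑ i ∈ s, b i * factorialPochhammerRatio A B (x i) q n) atTop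
      (𝓝 (b i₀ * (√π / (Gamma (x i₀) * 2 ^ B)))) := by
  have hterm : ∀ i ∈ s, Tendsto (fun n => b i * factorialPochhammerRatio A B (x i) q n) atTop
      (𝓝 (if i = i₀ then b i₀ * (√π / (Gamma (x i₀) * 2 ^ B)) else 0)) := by
    intro i hi
    rcases eq_or_ne i i₀ with rfl | hne
    · rw [if_pos rfl, ← hq₀]
      exact (tendsto_factorialPochhammerRatio A B (hx i hi)).const_mul (b i)
    · rw [if_neg hne, ← mul_zero (b i)]
      exact (tendsto_factorialPochhammerRatio_of_lt A B (hx i hi) (hq i hi hne)).const_mul (b i)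
  simpa [hi₀] using tendsto_finsetSum s hterm

theorem two_pow_mul_pi_pow_mul_sum_div_eq_sum_factorialPochhammerRatio (A B c d : ℕ)
    (s : Finset ℕ) (b x : ℕ → ℝ) (q : ℝ) (n : ℕ) :
    (2 ^ (c + n) * π ^ (d + 2 * n) * (((A + n)! : ℝ) / ((B + 2 * n)! : ℝ))
        * ∑ j ∈ s, b j * (ascPochhammer ℝ n).eval (x j)) * 2 ^ n / ((n : ℝ) ^ q * π ^ (2 * n))
      = 2 ^ c * π ^ d * ∑ j ∈ s, b j * factorialPochhammerRatio A B (x j) q n := by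
  simp only [factorialPochhammerRatio, mul_sum, sum_mul, sum_div]
  refine sum_congr rfl fun j _ => ?_
  field_simp
  ring

theorem stmt17_general (g : ℕ) (hg : 2 ≤ g) (b : ℕ → ℝ) :
    ∃ L : ℝ, 0 < L ∧
      Tendsto (fun n : ℕ =>
          2^(2*n) * (Nat.factorial (4*g - 4 + n) : ℝ)
            * (ascPochhammer ℝ n).eval ((5*(g:ℝ) - 5)/2)
            / ((n:ℝ) ^ ((g:ℝ)/2) * (Nat.factorial (6*g - 7 + 2*n) : ℝ)))
        atTop (nhds L) ∧
      Tendsto (fun n : ℕ =>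
          (2^(2*g + 1 + n) * Real.pi^(6*g - 6 + 2*n)
              * ((Nat.factorial (4*g - 4 + n) : ℝ) / (Nat.factorial (6*g - 7 + 2*n) : ℝ))
              * ∑ j ∈ Finset.range (g+1),
                  b j * (ascPochhammer ℝ n).eval ((5*(g:ℝ) - 5 - (j:ℝ))/2))
            * 2^n / ((n:ℝ) ^ ((g:ℝ)/2) * Real.pi^(2*n)))
        atTop (nhds (2^(2*g + 1) * Real.pi^(6*g - 6) * b 0 * L)) := by
  have hGamma : ∀ j ∈ range (g + 1), 0 < Gamma ((5 * g - 5 - j) / 2) := by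
    intro j hj
    have hjg : (j : ℝ) ≤ g := by exact_mod_cast mem_range_succ_iff.1 hj
    have hg' : (2 : ℝ) ≤ g := by exact_mod_cast hg
    exact Gamma_pos_of_pos (by linarith)
  have hexp : ∀ j : ℕ, ((4 * g - 4 : ℕ) : ℝ) + (5 * g - 5 - j) / 2 - (6 * g - 7 : ℕ) - 1 / 2
      = g / 2 - j / 2 := fun j => by
    rw [Nat.cast_sub (by omega), Nat.cast_sub (by omega)]
    push_cast
    ring
  have hpos : 0 < Gamma ((5 * g - 5) / 2) := by simpa using hGamma 0 (by simp)
  have hq₀ : ((4 * g - 4 : ℕ) : ℝ) + (5 * g - 5) / 2 - (6 * g - 7 : ℕ) - 1 / 2 = g / 2 := by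
    simpa using hexp 0
  have hL := tendsto_factorialPochhammerRatio (4 * g - 4) (6 * g - 7) hpos.ne'
  rw [hq₀] at hL
  have hsum := tendsto_sum_factorialPochhammerRatio (4 * g - 4) (6 * g - 7) (i₀ := 0) (by simp) b
    (fun j hj => (hGamma j hj).ne') (by simpa using hq₀)
    (fun j _ hj => by rw [hexp]; linarith [show (0 : ℝ) < j by positivity])
  refine ⟨_, by positivity, hL, ?_⟩
  simp only [two_pow_mul_pi_pow_mul_sum_div_eq_sum_factorialPochhammerRatio]
  simpa only [mul_assoc, Nat.cast_zero, sub_zero] using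
    hsum.const_mul (2 ^ (2 * g + 1) * π ^ (6 * g - 6))

theorem stmt17 (g : ℕ) (hg : 2 ≤ g) (b : ℕ → ℝ) (hb : ∀ j, 0 ≤ b j) (hb0 : 0 < b 0) :
    ∃ L : ℝ, 0 < L ∧
      Tendsto (fun n : ℕ =>
          2^(2*n) * (Nat.factorial (4*g - 4 + n) : ℝ)
            * (ascPochhammer ℝ n).eval ((5*(g:ℝ) - 5)/2)
            / ((n:ℝ) ^ ((g:ℝ)/2) * (Nat.factorial (6*g - 7 + 2*n) : ℝ)))
        atTop (nhds L) ∧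
      Tendsto (fun n : ℕ =>
          (2^(2*g + 1 + n) * Real.pi^(6*g - 6 + 2*n)
              * ((Nat.factorial (4*g - 4 + n) : ℝ) / (Nat.factorial (6*g - 7 + 2*n) : ℝ))
              * ∑ j ∈ Finset.range (g+1),
                  b j * (ascPochhammer ℝ n).eval ((5*(g:ℝ) - 5 - (j:ℝ))/2))
            * 2^n / ((n:ℝ) ^ ((g:ℝ)/2) * Real.pi^(2*n)))
        atTop (nhds (2^(2*g + 1) * Real.pi^(6*g - 6) * b 0 * L)) :=
  stmt17_general g hg b
end
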